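/- Let θ ∈ (0,1], 0 < κ < ∞, 0 < q ≤ ∞ and b ∈ SV. Then there exists a constant c > 0 such that for every μ-measurable function f on Ω and all 0 ≤ T < S ≤ ∞: ‖u^{−θ−1/q} b(u) K(u,f;L_κ,L_∞)‖_{q,(T,S)} ≥ c ‖v^{(1−θ)/κ−1/q} b(v^{1/κ}) f^*(v)‖_{q,(T^κ,S^κ)}, and likewise ‖u^{−θ−1/q} b(u) K(u,f;L_{κ,∞},L_∞)‖_{q,(T,S)} ≥ c ‖v^{(1−θ)/κ−1/q} b(v^{1/κ}) f^*(v)‖_{q,(T^κ,S^κ)}. -/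

import Mathlib

open MeasureTheory ENNReal Set

noncomputable section

/-- `‖g‖_{q,s}`: the Lebesgue quasi-norm (with values in `[0,∞]`) of an `ℝ≥0∞`-valued
function `g` over the set `s ⊆ ℝ`, for `0 < q ≤ ∞`; `q = ∞` gives the essential supremum. -/
def nrm (q : ℝ≥0∞) (g : ℝ → ℝ≥0∞) (s : Set ℝ) : ℝ≥0∞ :=
  if q = ∞ then essSup g (volume.restrict s)
  else (∫⁻ t in s, g t ^ q.toReal) ^ (1 / q.toReal)

/-- The interval `(T, S)` with a possibly infinite right endpoint `S`. -/
def IooE (T : ℝ) (S : ℝ≥0∞) : Set ℝ := {t : ℝ | T < t ∧ ENNReal.ofReal t < S}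

/-- Two (positive) functions are equivalent on `s`: each is bounded by a positive
constant multiple of the other. -/
def EquivOn (f g : ℝ → ℝ) (s : Set ℝ) : Prop :=
  ∃ c C : ℝ, 0 < c ∧ ∀ x ∈ s, c * g x ≤ f x ∧ f x ≤ C * g x

/-- Slowly varying functions on `(0,∞)`: `b` is measurable and positive on `(0,∞)`, and for
every `ε > 0` the function `t ↦ t^ε b(t)` is equivalent to a non-decreasing function on
`(0,∞)` while `t ↦ t^(-ε) b(t)` is equivalent to a non-increasing one. -/
def IsSV (b : ℝ → ℝ) : Prop :=
  Measurable b ∧ (∀ x ∈ Ioi (0:ℝ), 0 < b x) ∧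
  ∀ ε : ℝ, 0 < ε →
    (∃ g : ℝ → ℝ, MonotoneOn g (Ioi 0) ∧ EquivOn (fun t => t ^ ε * b t) g (Ioi 0)) ∧
    (∃ g : ℝ → ℝ, AntitoneOn g (Ioi 0) ∧ EquivOn (fun t => t ^ (-ε) * b t) g (Ioi 0))

/-- A measure is non-atomic: every set of positive measure has a measurable subset of
strictly smaller positive measure. -/
def Nonatomic {Ω : Type*} [MeasurableSpace Ω] (μ : Measure Ω) : Prop :=
  ∀ s : Set Ω, MeasurableSet s → 0 < μ s →
    ∃ t : Set Ω, MeasurableSet t ∧ t ⊆ s ∧ 0 < μ t ∧ μ t < μ s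

variable {Ω : Type*} [MeasurableSpace Ω]

/-- The non-increasing rearrangement `f^*` (with values in `[0,∞]`). -/
def rearr (μ : Measure Ω) (f : Ω → ℝ) (t : ℝ) : ℝ≥0∞ :=
  sInf {s : ℝ≥0∞ | μ {x | s < (‖f x‖₊ : ℝ≥0∞)} ≤ ENNReal.ofReal t}

/-- The maximal function `f^{**}(t) = t⁻¹ ∫_0^t f^*`. -/
def dstar (μ : Measure Ω) (f : Ω → ℝ) (t : ℝ) : ℝ≥0∞ :=
  (ENNReal.ofReal t)⁻¹ * ∫⁻ τ in Ioo 0 t, rearr μ f τ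

/-- `f^{**}_{(κ)}(t) = t⁻¹ (∫_0^{t^κ} (f^*)^κ)^{1/κ}`. -/
def dstarK (κ : ℝ) (μ : Measure Ω) (f : Ω → ℝ) (t : ℝ) : ℝ≥0∞ :=
  (ENNReal.ofReal t)⁻¹ * (∫⁻ τ in Ioo 0 (t ^ κ), rearr μ f τ ^ κ) ^ (1 / κ)

/-- The `L_κ` quasi-norm `(∫_Ω |g|^κ dμ)^{1/κ}`. -/
def normLp (κ : ℝ) (μ : Measure Ω) (g : Ω → ℝ) : ℝ≥0∞ :=
  (∫⁻ x, ((‖g x‖₊ : ℝ≥0∞)) ^ κ ∂μ) ^ (1 / κ)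

/-- The `L_∞` norm `ess sup |g|`. -/
def normLinf (μ : Measure Ω) (g : Ω → ℝ) : ℝ≥0∞ :=
  essSup (fun x => ((‖g x‖₊ : ℝ≥0∞))) μ

/-- The weak `L_κ` quasi-norm `sup_{t>0} t^{1/κ} g^*(t)`. -/
def normLw (κ : ℝ) (μ : Measure Ω) (g : Ω → ℝ) : ℝ≥0∞ :=
  ⨆ (t : ℝ) (_ : 0 < t), ENNReal.ofReal t ^ (1 / κ) * rearr μ g t

/-- The Peetre K-functional for the couple with quasi-norms `N0`, `N1`; equals `∞` if
there is no decomposition with both quasi-norms finite. -/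
def Kf (t : ℝ) (f : Ω → ℝ) (N0 N1 : (Ω → ℝ) → ℝ≥0∞) : ℝ≥0∞ :=
  ⨅ (g : Ω → ℝ) (h : Ω → ℝ) (_ : f = g + h), N0 g + ENNReal.ofReal t * N1 h

/-- `K(t, f; L_κ, L_∞)`. -/
def KLp (κ : ℝ) (μ : Measure Ω) (t : ℝ) (f : Ω → ℝ) : ℝ≥0∞ :=
  Kf t f (normLp κ μ) (normLinf μ)

/-- `K(t, f; L_{κ,∞}, L_∞)`. -/
def KLw (κ : ℝ) (μ : Measure Ω) (t : ℝ) (f : Ω → ℝ) : ℝ≥0∞ :=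
  Kf t f (normLw κ μ) (normLinf μ)

/-!
For every decomposition `f = g + h` one has `f^*(t) ≤ g^*(t) + ‖h‖_∞`, and `t^{1/κ} g^*(t)` is
bounded by `‖g‖_{L_{κ,∞}}`, and by `‖g‖_{L_κ}` through Chebyshev's inequality. Hence
`u f^*(u^κ) ≤ K(u, f)` for both couples. Substituting `v = u^κ` in the left-hand norm turns its
weight into `u^{-θ-1/q} b(u) · u`, so the inequality holds with `c = κ^{-1/q}`.
-/

section Rearrangement

variable {μ : Measure Ω} {κ t : ℝ}

lemma lt_measure_of_lt_rearr {f : Ω → ℝ} {s : ℝ≥0∞} (h : s < rearr μ f t) :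
    ENNReal.ofReal t < μ {x | s < ‖f x‖₊} := by
  contrapose! h
  exact sInf_le h

lemma rearr_add_le (g h : Ω → ℝ) (t : ℝ) :
    rearr μ (g + h) t ≤ rearr μ g t + normLinf μ h := by
  unfold rearr
  rw [sInf_add]
  refine le_iInf₂ fun s hs => sInf_le <| (measure_mono_ae ?_).trans hs
  filter_upwards [ENNReal.ae_le_essSup (μ := μ) fun x => (‖h x‖₊ : ℝ≥0∞)] with x hx hlt
  have hgh : (‖(g + h) x‖₊ : ℝ≥0∞) ≤ ‖g x‖₊ + ‖h x‖₊ := by exact_mod_cast nnnorm_add_le _ _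
  exact lt_of_add_lt_add_right (hlt.trans_le (hgh.trans (by gcongr; exact hx)))

lemma rpow_mul_rearr_add_le_normLw (ht : 0 < t) (g h : Ω → ℝ) :
    ENNReal.ofReal t ^ (1 / κ) * rearr μ (g + h) t ≤
      normLw κ μ g + ENNReal.ofReal t ^ (1 / κ) * normLinf μ h :=
  calc ENNReal.ofReal t ^ (1 / κ) * rearr μ (g + h) t
      ≤ ENNReal.ofReal t ^ (1 / κ) * (rearr μ g t + normLinf μ h) := by
        gcongr; exact rearr_add_le g h t
    _ = ENNReal.ofReal t ^ (1 / κ) * rearr μ g t + ENNReal.ofReal t ^ (1 / κ) * normLinf μ h :=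
        mul_add _ _ _
    _ ≤ _ := by
        gcongr
        exact le_iSup₂ (f := fun (t : ℝ) (_ : 0 < t) => ENNReal.ofReal t ^ (1 / κ) * rearr μ g t)
          t ht

lemma rpow_mul_rearr_add_le_normLp (hκ : 0 < κ) {g h : Ω → ℝ} (hgh : Measurable (g + h))
    (t : ℝ) :
    ENNReal.ofReal t ^ (1 / κ) * rearr μ (g + h) t ≤
      normLp κ μ g + ENNReal.ofReal t ^ (1 / κ) * normLinf μ h := by
  set M := normLinf μ h
  set r := rearr μ (g + h) t
  -- `g` need not be measurable, so Chebyshev's inequality is applied to the measurable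
  -- minorant `|g + h| - ‖h‖_∞` of `|g|`.
  set φ : Ω → ℝ≥0∞ := fun x => ‖(g + h) x‖₊ - M
  have hφ : Measurable φ := hgh.nnnorm.coe_nnreal_ennreal.sub_const M
  have hφ_le : ∀ᵐ x ∂μ, φ x ≤ ‖g x‖₊ := by
    filter_upwards [ENNReal.ae_le_essSup (μ := μ) fun x => (‖h x‖₊ : ℝ≥0∞)] with x hx
    have hgh : (‖(g + h) x‖₊ : ℝ≥0∞) ≤ ‖g x‖₊ + ‖h x‖₊ := by exact_mod_cast nnnorm_add_le _ _
    exact tsub_le_iff_right.2 (hgh.trans (by gcongr; exact hx))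
  have hcheb : ∀ s < r - M, ENNReal.ofReal t ^ (1 / κ) * s ≤ normLp κ μ g := by
    intro s hs
    have hmeas : ENNReal.ofReal t * s ^ κ ≤ ∫⁻ x, (‖g x‖₊ : ℝ≥0∞) ^ κ ∂μ :=
      calc ENNReal.ofReal t * s ^ κ ≤ s ^ κ * μ {x | s ^ κ ≤ φ x ^ κ} := by
            rw [mul_comm]
            gcongr
            refine (lt_measure_of_lt_rearr (lt_tsub_iff_right.1 hs)).le.trans (measure_mono ?_)
            exact fun x hx => ENNReal.rpow_le_rpow (lt_tsub_iff_right.2 hx).le hκ.le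
        _ ≤ ∫⁻ x, φ x ^ κ ∂μ := mul_meas_ge_le_lintegral₀ (hφ.pow_const κ).aemeasurable _
        _ ≤ ∫⁻ x, (‖g x‖₊ : ℝ≥0∞) ^ κ ∂μ :=
            lintegral_mono_ae (hφ_le.mono fun x hx => ENNReal.rpow_le_rpow hx hκ.le)
    calc ENNReal.ofReal t ^ (1 / κ) * s = (ENNReal.ofReal t * s ^ κ) ^ (1 / κ) := by
          rw [ENNReal.mul_rpow_of_nonneg _ _ (by positivity), ← ENNReal.rpow_mul,
            mul_one_div_cancel hκ.ne', ENNReal.rpow_one]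
      _ ≤ normLp κ μ g := ENNReal.rpow_le_rpow hmeas (by positivity)
  calc ENNReal.ofReal t ^ (1 / κ) * r ≤ ENNReal.ofReal t ^ (1 / κ) * (r - M + M) := by
        gcongr; exact le_tsub_add
    _ = ENNReal.ofReal t ^ (1 / κ) * (r - M) + ENNReal.ofReal t ^ (1 / κ) * M := mul_add _ _ _
    _ ≤ _ := by
        gcongr
        exact ENNReal.mul_le_of_forall_lt fun a ha s hs =>
          le_trans (by gcongr) (hcheb s hs)

end Rearrangement

section KFunctional

variable {μ : Measure Ω} {κ : ℝ}

lemma le_Kf {α : Type*} {t : ℝ} {f : α → ℝ} {N0 N1 : (α → ℝ) → ℝ≥0∞} {a : ℝ≥0∞}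
    (H : ∀ g h : α → ℝ, f = g + h → a ≤ N0 g + ENNReal.ofReal t * N1 h) : a ≤ Kf t f N0 N1 :=
  le_iInf₂ fun g h => le_iInf (H g h)

lemma ofReal_rpow_rpow_one_div (hκ : 0 < κ) {u : ℝ} (hu : 0 ≤ u) :
    ENNReal.ofReal (u ^ κ) ^ (1 / κ) = ENNReal.ofReal u := by
  rw [ENNReal.ofReal_rpow_of_nonneg (Real.rpow_nonneg hu κ) (by positivity), ← Real.rpow_mul hu,
    mul_one_div_cancel hκ.ne', Real.rpow_one]

lemma mul_rearr_rpow_le_KLp (hκ : 0 < κ) {f : Ω → ℝ} (hf : Measurable f) {u : ℝ} (hu : 0 ≤ u) :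
    ENNReal.ofReal u * rearr μ f (u ^ κ) ≤ KLp κ μ u f :=
  le_Kf fun g h hfgh => by
    subst hfgh
    simpa only [ofReal_rpow_rpow_one_div hκ hu] using rpow_mul_rearr_add_le_normLp hκ hf (u ^ κ)

lemma mul_rearr_rpow_le_KLw (hκ : 0 < κ) {u : ℝ} (hu : 0 < u) (f : Ω → ℝ) :
    ENNReal.ofReal u * rearr μ f (u ^ κ) ≤ KLw κ μ u f :=
  le_Kf fun g h hfgh => by
    subst hfgh
    simpa only [ofReal_rpow_rpow_one_div hκ hu.le] using
      rpow_mul_rearr_add_le_normLw (μ := μ) (κ := κ) (Real.rpow_pos_of_pos hu κ) g h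

end KFunctional

section ChangeOfVariables

variable {q : ℝ≥0∞} {κ : ℝ}

lemma nrm_mono {g₁ g₂ : ℝ → ℝ≥0∞} {s : Set ℝ} (hs : MeasurableSet s)
    (h : ∀ x ∈ s, g₁ x ≤ g₂ x) : nrm q g₁ s ≤ nrm q g₂ s := by
  unfold nrm
  split_ifs
  · exact essSup_mono_ae ((ae_restrict_iff' hs).2 (Filter.Eventually.of_forall h))
  · exact ENNReal.rpow_le_rpow
      (setLIntegral_mono' hs fun x hx => ENNReal.rpow_le_rpow (h x hx) ENNReal.toReal_nonneg)
      (by positivity)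

lemma essSup_restrict_image_le {e : ℝ → ℝ} {s : Set ℝ} (he : DifferentiableOn ℝ e s)
    (hes : MeasurableSet (e '' s)) (W : ℝ → ℝ≥0∞) :
    essSup W (volume.restrict (e '' s)) ≤ essSup (W ∘ e) (volume.restrict s) := by
  set c := essSup (W ∘ e) (volume.restrict s)
  have hnull : volume ({u | c < W (e u)} ∩ s) = 0 := by
    refine le_antisymm ((Measure.le_restrict_apply _ _).trans ?_) bot_le
    have hae := ENNReal.ae_le_essSup (μ := volume.restrict s) (W ∘ e)
    rw [ae_iff] at hae
    simpa only [Function.comp_apply, not_le] using hae.le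
  refine essSup_le_of_ae_le c ((ae_restrict_iff' hes).2 (ae_iff.2 (measure_mono_null ?_
    (addHaar_image_eq_zero_of_differentiableOn_of_addHaar_eq_zero volume
      (he.mono inter_subset_right) hnull))))
  rintro v hv
  obtain ⟨⟨u, hu, rfl⟩, hlt⟩ := Classical.not_imp.1 hv
  exact ⟨u, ⟨not_le.1 hlt, hu⟩, rfl⟩

-- For `q = ∞` the exponents `1 / q.toReal` vanish (`q.toReal = 0`), as with `1/∞ = 0`.
lemma nrm_image_rpow_le (hκ : 0 < κ) (hq : 0 < q) {s : Set ℝ} (hs : MeasurableSet s)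
    (hs0 : s ⊆ Ioi 0) (W : ℝ → ℝ≥0∞) :
    nrm q W ((· ^ κ) '' s) ≤ ENNReal.ofReal (κ ^ (1 / q.toReal)) *
      nrm q (fun u => ENNReal.ofReal (u ^ ((κ - 1) / q.toReal)) * W (u ^ κ)) s := by
  have hderiv : ∀ u ∈ s, HasDerivWithinAt (· ^ κ) (κ * u ^ (κ - 1)) s u := fun u hu =>
    (Real.hasDerivAt_rpow_const (Or.inl (hs0 hu).ne')).hasDerivWithinAt
  have hmono : MonotoneOn (· ^ κ) s :=
    (Real.monotoneOn_rpow_Ici_of_exponent_nonneg hκ.le).mono (hs0.trans Ioi_subset_Ici_self)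
  unfold nrm
  split_ifs with hqtop
  · obtain rfl := hqtop
    simp only [toReal_top, _root_.div_zero, Real.rpow_zero, ofReal_one, one_mul]
    exact essSup_restrict_image_le (fun u hu => (hderiv u hu).differentiableWithinAt)
      (hs.image_of_monotoneOn hmono) W
  · set p := q.toReal
    have hp : 0 < p := ENNReal.toReal_pos hq.ne' hqtop
    rw [lintegral_image_eq_lintegral_deriv_mul_of_monotoneOn hs hderiv hmono,
      ← ENNReal.ofReal_rpow_of_pos hκ, ← ENNReal.mul_rpow_of_nonneg _ _ (by positivity),
      ← lintegral_const_mul' _ _ ENNReal.ofReal_ne_top]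
    refine (ENNReal.rpow_le_rpow (setLIntegral_mono' hs fun u hu => le_of_eq ?_) (by positivity))
    have hu : 0 < u := hs0 hu
    rw [ENNReal.mul_rpow_of_nonneg _ _ hp.le, ENNReal.ofReal_rpow_of_pos (by positivity),
      ← Real.rpow_mul hu.le, div_mul_cancel₀ _ hp.ne', ← mul_assoc,
      ← ENNReal.ofReal_mul hκ.le]

lemma measurableSet_IooE (T : ℝ) (S : ℝ≥0∞) : MeasurableSet (IooE T S) :=
  measurableSet_Ioi.inter (ENNReal.measurable_ofReal measurableSet_Iio)

lemma image_rpow_IooE (hκ : 0 < κ) {T : ℝ} (hT : 0 ≤ T) (S : ℝ≥0∞) :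
    (· ^ κ) '' IooE T S = IooE (T ^ κ) (S ^ κ) := by
  ext v
  constructor
  · rintro ⟨u, ⟨hTu, huS⟩, rfl⟩
    have hu : 0 < u := hT.trans_lt hTu
    refine ⟨Real.rpow_lt_rpow hT hTu hκ, ?_⟩
    rw [← ENNReal.ofReal_rpow_of_pos hu]
    exact ENNReal.rpow_lt_rpow huS hκ
  · rintro ⟨hTv, hvS⟩
    have hv : 0 < v := (Real.rpow_nonneg hT κ).trans_lt hTv
    refine ⟨v ^ κ⁻¹, ⟨(Real.lt_rpow_inv_iff_of_pos hT hv.le hκ).2 hTv, ?_⟩,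
      Real.rpow_inv_rpow hv.le hκ.ne'⟩
    rw [← ENNReal.ofReal_rpow_of_pos hv]
    exact (ENNReal.rpow_inv_lt_iff hκ).2 hvS

lemma nrm_le_of_mul_comp_rpow_le (hκ : 0 < κ) (hq : 0 < q) (θ : ℝ) (b : ℝ → ℝ) {F K : ℝ → ℝ≥0∞}
    (hFK : ∀ u, 0 < u → ENNReal.ofReal u * F (u ^ κ) ≤ K u) {T : ℝ} (hT : 0 ≤ T) (S : ℝ≥0∞) :
    ENNReal.ofReal ((κ ^ (1 / q.toReal))⁻¹) *
        nrm q (fun v => ENNReal.ofReal (v ^ ((1 - θ) / κ - 1 / q.toReal) * b (v ^ (1 / κ))) * F v)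
          (IooE (T ^ κ) (S ^ κ)) ≤
      nrm q (fun u => ENNReal.ofReal (u ^ (-θ - 1 / q.toReal) * b u) * K u) (IooE T S) := by
  set p := q.toReal
  have hweight : ∀ u : ℝ, 0 < u → u ^ ((κ - 1) / p) * ((u ^ κ) ^ ((1 - θ) / κ - 1 / p) *
      b ((u ^ κ) ^ (1 / κ))) = u ^ (-θ - 1 / p) * b u * u := by
    intro u hu
    rw [← Real.rpow_mul hu.le, ← Real.rpow_mul hu.le, mul_one_div_cancel hκ.ne', Real.rpow_one,
      ← mul_assoc, ← Real.rpow_add hu, mul_right_comm, ← Real.rpow_add_one hu.ne']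
    congr 2
    field_simp
    ring
  rw [← image_rpow_IooE hκ hT S]
  refine (mul_le_mul_right (nrm_image_rpow_le hκ hq (measurableSet_IooE T S)
    (fun u hu => hT.trans_lt hu.1) _) _).trans ?_
  rw [← mul_assoc, ← ENNReal.ofReal_mul (by positivity), inv_mul_cancel₀ (by positivity),
    ENNReal.ofReal_one, one_mul]
  refine nrm_mono (measurableSet_IooE T S) fun u hu => ?_
  have hu : 0 < u := hT.trans_lt hu.1
  rw [← mul_assoc, ← ENNReal.ofReal_mul (by positivity), hweight u hu, ENNReal.ofReal_mul' hu.le,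
    mul_assoc]
  gcongr
  exact hFK u hu

end ChangeOfVariables

theorem statement5_general {Ω : Type*} [MeasurableSpace Ω] (μ : Measure Ω)
    (θ κ : ℝ) (hκ : 0 < κ)
    (q : ℝ≥0∞) (hq : 0 < q) (b : ℝ → ℝ) :
    ∃ c : ℝ, 0 < c ∧
      ∀ f : Ω → ℝ, Measurable f →
        ∀ (T : ℝ) (S : ℝ≥0∞), 0 ≤ T → ENNReal.ofReal T < S →
          (ENNReal.ofReal c *
              (nrm q (fun v => ENNReal.ofReal (v ^ ((1 - θ) / κ - 1 / q.toReal) * b (v ^ (1 / κ))) *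
              rearr μ f v) (IooE (T ^ κ) (S ^ κ))) ≤
            nrm q (fun u => ENNReal.ofReal (u ^ (-θ - 1 / q.toReal) * b u) * KLp κ μ u f) (IooE T S)) ∧
          (ENNReal.ofReal c *
              (nrm q (fun v => ENNReal.ofReal (v ^ ((1 - θ) / κ - 1 / q.toReal) * b (v ^ (1 / κ))) *
              rearr μ f v) (IooE (T ^ κ) (S ^ κ))) ≤
            nrm q (fun u => ENNReal.ofReal (u ^ (-θ - 1 / q.toReal) * b u) * KLw κ μ u f) (IooE T S)) := by
  refine ⟨(κ ^ (1 / q.toReal))⁻¹, by positivity, fun f hf T S hT _ => ⟨?_, ?_⟩⟩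
  · exact nrm_le_of_mul_comp_rpow_le hκ hq θ b (fun u hu => mul_rearr_rpow_le_KLp hκ hf hu.le) hT S
  · exact nrm_le_of_mul_comp_rpow_le hκ hq θ b (fun u hu => mul_rearr_rpow_le_KLw hκ hu f) hT S

theorem statement5 {Ω : Type*} [MeasurableSpace Ω] (μ : Measure Ω) [SigmaFinite μ]
    (hμ : Nonatomic μ) (θ κ : ℝ) (hθ0 : 0 < θ) (hθ1 : θ ≤ 1) (hκ : 0 < κ)
    (q : ℝ≥0∞) (hq : 0 < q) (b : ℝ → ℝ) (hb : IsSV b) :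
    ∃ c : ℝ, 0 < c ∧
      ∀ f : Ω → ℝ, Measurable f →
        ∀ (T : ℝ) (S : ℝ≥0∞), 0 ≤ T → ENNReal.ofReal T < S →
          (ENNReal.ofReal c *
              (nrm q (fun v => ENNReal.ofReal (v ^ ((1 - θ) / κ - 1 / q.toReal) * b (v ^ (1 / κ))) *
              rearr μ f v) (IooE (T ^ κ) (S ^ κ))) ≤
            nrm q (fun u => ENNReal.ofReal (u ^ (-θ - 1 / q.toReal) * b u) * KLp κ μ u f) (IooE T S)) ∧
          (ENNReal.ofReal c *
              (nrm q (fun v => ENNReal.ofReal (v ^ ((1 - θ) / κ - 1 / q.toReal) * b (v ^ (1 / κ))) *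
              rearr μ f v) (IooE (T ^ κ) (S ^ κ))) ≤
            nrm q (fun u => ENNReal.ofReal (u ^ (-θ - 1 / q.toReal) * b u) * KLw κ μ u f) (IooE T S)) :=
  statement5_general μ θ κ hκ q hq b
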